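/- Let A be a Banach operator ideal such that T ∈ A(E;F) implies T** ∈ A(E**;F**) for all Banach spaces E, F (i.e., A ⊂ A^{dual dual}), and let X and Y be Banach spaces. Then the finite-rank operators from Y to X* are ‖·‖_A-dense in A(Y;X*) if and only if the finite-rank operators from X to Y* are ‖·‖_{A^{dual}}-dense in A^{dual}(X;Y*). -/

import Mathlib

open Filter Topology

noncomputable section

/-- A bundled Banach space over the scalar field `𝕜`. -/
structure BanachSp (𝕜 : Type) [RCLike 𝕜] : Type 1 where
  carrier : Type
  [grp : NormedAddCommGroup carrier]
  [mod : NormedSpace 𝕜 carrier]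
  [cpl : CompleteSpace carrier]

attribute [instance] BanachSp.grp BanachSp.mod BanachSp.cpl

instance {𝕜 : Type} [RCLike 𝕜] : CoeSort (BanachSp 𝕜) Type :=
  ⟨BanachSp.carrier⟩

/-- The dual of a bundled Banach space, as a bundled Banach space. -/
def BanachSp.dual {𝕜 : Type} [RCLike 𝕜] (E : BanachSp 𝕜) : BanachSp 𝕜 :=
  .mk (StrongDual 𝕜 E)

/-- The canonical isometric embedding `J_E` of a Banach space into its bidual. -/
def canJ {𝕜 : Type} [RCLike 𝕜] (E : BanachSp 𝕜) : E →L[𝕜] E.dual.dual :=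
  NormedSpace.inclusionInDoubleDual 𝕜 E

/-- The adjoint (dual/transpose) of a bounded operator between Banach spaces. -/
def opAdj {𝕜 : Type} [RCLike 𝕜] {E F : BanachSp 𝕜} (T : E →L[𝕜] F) :
    F.dual →L[𝕜] E.dual :=
  (ContinuousLinearMap.compL 𝕜 E F 𝕜).flip T

/-- A continuous linear map has finite rank if its range is finite dimensional. -/
def IsFiniteRank {𝕜 : Type} [RCLike 𝕜] {E F : Type} [NormedAddCommGroup E] [NormedSpace 𝕜 E]
    [NormedAddCommGroup F] [NormedSpace 𝕜 F] (T : E →L[𝕜] F) : Prop :=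
  FiniteDimensional 𝕜 (LinearMap.range (T : E →ₗ[𝕜] F))

/-- A (nonempty, upward-directed) index for a net. -/
structure DirNet : Type 1 where
  ι : Type
  [pre : Preorder ι]
  [ne : Nonempty ι]
  [dir : IsDirected ι (· ≤ ·)]

attribute [instance] DirNet.pre DirNet.ne DirNet.dir

/-- The `atTop` filter of a directed index, describing eventual behaviour of nets. -/
def DirNet.filter (d : DirNet) : Filter d.ι := Filter.atTop

/-- A Banach operator ideal `A`: to each pair of Banach spaces `(E, F)` it assigns a
linear subspace `mem E F` of bounded operators together with an ideal norm `anorm`,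
which is a complete norm on `mem E F`, contains the rank-one (hence all finite-rank)
operators with `‖x* ⊗ y‖_A = ‖x*‖ * ‖y*‖`, satisfies the ideal property
`‖R T S‖_A ≤ ‖R‖ ‖T‖_A ‖S‖`, and dominates the operator norm. -/
structure OpIdeal (𝕜 : Type) [RCLike 𝕜] : Type 1 where
  mem : ∀ E F : BanachSp 𝕜, Set (E →L[𝕜] F)
  anorm : ∀ E F : BanachSp 𝕜, (E →L[𝕜] F) → ℝ
  zero_mem : ∀ E F : BanachSp 𝕜, (0 : E →L[𝕜] F) ∈ mem E F
  add_mem : ∀ (E F : BanachSp 𝕜) {T S : E →L[𝕜] F},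
    T ∈ mem E F → S ∈ mem E F → T + S ∈ mem E F
  smul_mem : ∀ (E F : BanachSp 𝕜) (c : 𝕜) {T : E →L[𝕜] F}, T ∈ mem E F → c • T ∈ mem E F
  anorm_add_le : ∀ (E F : BanachSp 𝕜) {T S : E →L[𝕜] F}, T ∈ mem E F → S ∈ mem E F →
    anorm E F (T + S) ≤ anorm E F T + anorm E F S
  anorm_smul : ∀ (E F : BanachSp 𝕜) (c : 𝕜) {T : E →L[𝕜] F}, T ∈ mem E F →
    anorm E F (c • T) = ‖c‖ * anorm E F T
  rankOne_mem : ∀ (E F : BanachSp 𝕜) (f : E →L[𝕜] 𝕜) (y : F), f.smulRight y ∈ mem E F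
  anorm_rankOne : ∀ (E F : BanachSp 𝕜) (f : E →L[𝕜] 𝕜) (y : F),
    anorm E F (f.smulRight y) = ‖f‖ * ‖y‖
  comp_mem : ∀ (E₀ E F F₀ : BanachSp 𝕜) (S : E₀ →L[𝕜] E) {T : E →L[𝕜] F} (R : F →L[𝕜] F₀),
    T ∈ mem E F → R.comp (T.comp S) ∈ mem E₀ F₀
  anorm_comp_le : ∀ (E₀ E F F₀ : BanachSp 𝕜) (S : E₀ →L[𝕜] E) {T : E →L[𝕜] F} (R : F →L[𝕜] F₀),
    T ∈ mem E F → anorm E₀ F₀ (R.comp (T.comp S)) ≤ ‖R‖ * anorm E F T * ‖S‖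
  opNorm_le_anorm : ∀ (E F : BanachSp 𝕜) {T : E →L[𝕜] F}, T ∈ mem E F → ‖T‖ ≤ anorm E F T
  complete : ∀ (E F : BanachSp 𝕜) (f : ℕ → (E →L[𝕜] F)), (∀ n, f n ∈ mem E F) →
    (∀ ε : ℝ, 0 < ε → ∃ N : ℕ, ∀ m ≥ N, ∀ n ≥ N, anorm E F (f m - f n) < ε) →
    ∃ T ∈ mem E F, ∀ ε : ℝ, 0 < ε → ∃ N : ℕ, ∀ n ≥ N, anorm E F (f n - T) < ε

/-- A closed operator ideal: an operator ideal whose components contain all finite-rank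
operators and are closed in the operator norm; it carries the operator norm. -/
structure ClosedOpIdeal (𝕜 : Type) [RCLike 𝕜] : Type 1 where
  mem : ∀ E F : BanachSp 𝕜, Set (E →L[𝕜] F)
  finiteRank_mem : ∀ (E F : BanachSp 𝕜) (T : E →L[𝕜] F), IsFiniteRank T → T ∈ mem E F
  add_mem : ∀ (E F : BanachSp 𝕜) {T S : E →L[𝕜] F},
    T ∈ mem E F → S ∈ mem E F → T + S ∈ mem E F
  smul_mem : ∀ (E F : BanachSp 𝕜) (c : 𝕜) {T : E →L[𝕜] F}, T ∈ mem E F → c • T ∈ mem E F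
  comp_mem : ∀ (E₀ E F F₀ : BanachSp 𝕜) (S : E₀ →L[𝕜] E) {T : E →L[𝕜] F} (R : F →L[𝕜] F₀),
    T ∈ mem E F → R.comp (T.comp S) ∈ mem E₀ F₀
  isClosed : ∀ E F : BanachSp 𝕜, IsClosed (mem E F)

/-- There is a net `(S_α)` of finite-rank operators on `X` converging to the identity
pointwise, with `cost (S_α) ≤ bound + ε` eventually, for every `ε > 0`
(i.e. `limsup_α cost (S_α) ≤ bound`). -/
def IdApproxPtw {𝕜 : Type} [RCLike 𝕜] (X : BanachSp 𝕜)
    (cost : (X →L[𝕜] X) → ℝ) (bound : ℝ) : Prop :=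
  ∃ (d : DirNet) (S : d.ι → (X →L[𝕜] X)),
    (∀ α, IsFiniteRank (S α)) ∧
    (∀ x : X, Tendsto (fun α => S α x) d.filter (𝓝 x)) ∧
    (∀ ε : ℝ, 0 < ε → ∀ᶠ α in d.filter, cost (S α) ≤ bound + ε)

/-- There is a net `(S_α)` of finite-rank operators on `X` converging to the identity
uniformly on every compact subset of `X`, with `limsup_α cost (S_α) ≤ bound`. -/
def IdApproxUnifComp {𝕜 : Type} [RCLike 𝕜] (X : BanachSp 𝕜)
    (cost : (X →L[𝕜] X) → ℝ) (bound : ℝ) : Prop :=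
  ∃ (d : DirNet) (S : d.ι → (X →L[𝕜] X)),
    (∀ α, IsFiniteRank (S α)) ∧
    (∀ K : Set X, IsCompact K →
      TendstoUniformlyOn (fun α (x : X) => S α x) (fun x => x) d.filter K) ∧
    (∀ ε : ℝ, 0 < ε → ∀ᶠ α in d.filter, cost (S α) ≤ bound + ε)

/-- There is a net `(S_α)` of finite-rank operators on `X` converging to the identity in
the topology `τ` on `L(X)`, with `limsup_α cost (S_α) ≤ bound`. -/
def IdApproxTau {𝕜 : Type} [RCLike 𝕜] (X : BanachSp 𝕜) (τ : TopologicalSpace (X →L[𝕜] X))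
    (cost : (X →L[𝕜] X) → ℝ) (bound : ℝ) : Prop :=
  ∃ (d : DirNet) (S : d.ι → (X →L[𝕜] X)),
    (∀ α, IsFiniteRank (S α)) ∧
    Tendsto S d.filter (@nhds _ τ (ContinuousLinearMap.id 𝕜 X)) ∧
    (∀ ε : ℝ, 0 < ε → ∀ᶠ α in d.filter, cost (S α) ≤ bound + ε)

/-- There is a net `(T_α)` of finite-rank operators from `X` to `Y` converging to `T`
pointwise, with `limsup_α cost (T_α) ≤ bound`. -/
def MapApproxPtw {𝕜 : Type} [RCLike 𝕜] {X Y : BanachSp 𝕜} (T : X →L[𝕜] Y)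
    (cost : (X →L[𝕜] Y) → ℝ) (bound : ℝ) : Prop :=
  ∃ (d : DirNet) (Tα : d.ι → (X →L[𝕜] Y)),
    (∀ α, IsFiniteRank (Tα α)) ∧
    (∀ x : X, Tendsto (fun α => Tα α x) d.filter (𝓝 (T x))) ∧
    (∀ ε : ℝ, 0 < ε → ∀ᶠ α in d.filter, cost (Tα α) ≤ bound + ε)

/-- `X` has the `λ`-BAP for the Banach operator ideal `A` (net converging to the identity
uniformly on compact sets, `limsup ‖T S_α‖_A ≤ λ ‖T‖_A`). -/
def HasBAPFor {𝕜 : Type} [RCLike 𝕜] (A : OpIdeal 𝕜) (l : ℝ) (X : BanachSp 𝕜) : Prop :=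
  ∀ (Y : BanachSp 𝕜) (T : X →L[𝕜] Y), T ∈ A.mem X Y →
    IdApproxUnifComp X (fun S => A.anorm X Y (T.comp S)) (l * A.anorm X Y T)

/-- `X` has the weak `λ`-BAP for the Banach operator ideal `A` (net converging to the
identity pointwise, `limsup ‖T S_α‖_A ≤ λ ‖T‖_A`). -/
def HasWeakBAPFor {𝕜 : Type} [RCLike 𝕜] (A : OpIdeal 𝕜) (l : ℝ) (X : BanachSp 𝕜) : Prop :=
  ∀ (Y : BanachSp 𝕜) (T : X →L[𝕜] Y), T ∈ A.mem X Y →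
    IdApproxPtw X (fun S => A.anorm X Y (T.comp S)) (l * A.anorm X Y T)

/-- `X` has the local `λ`-BAP for the Banach operator ideal `A` (for every `T ∈ A(X;Y)`,
a net of finite-rank operators converging to `T` pointwise with
`limsup ‖T_α‖_A ≤ λ ‖T‖_A`). -/
def HasLocalBAPFor {𝕜 : Type} [RCLike 𝕜] (A : OpIdeal 𝕜) (l : ℝ) (X : BanachSp 𝕜) : Prop :=
  ∀ (Y : BanachSp 𝕜) (T : X →L[𝕜] Y), T ∈ A.mem X Y →
    MapApproxPtw T (A.anorm X Y) (l * A.anorm X Y T)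

/-- `X` has the approximation property: a net of finite-rank operators converging to the
identity uniformly on compact subsets of `X`. -/
def HasAP {𝕜 : Type} [RCLike 𝕜] (X : BanachSp 𝕜) : Prop :=
  ∃ (d : DirNet) (S : d.ι → (X →L[𝕜] X)),
    (∀ α, IsFiniteRank (S α)) ∧
    ∀ K : Set X, IsCompact K →
      TendstoUniformlyOn (fun α (x : X) => S α x) (fun x => x) d.filter K
/-- An `A^{dual}`-null sequence in `E`: it factors as `x_n = R z_n` with `(z_n)` norm-null
and `R` an operator whose adjoint belongs to `A`. -/
def ADualNull {𝕜 : Type} [RCLike 𝕜] (A : OpIdeal 𝕜) (E : BanachSp 𝕜) (x : ℕ → E) : Prop :=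
  ∃ (Z : BanachSp 𝕜) (R : Z →L[𝕜] E), opAdj R ∈ A.mem E.dual Z.dual ∧
    ∃ z : ℕ → Z, Tendsto z atTop (𝓝 0) ∧ ∀ n, x n = R (z n)

/-- A Banach operator ideal is injective if membership and the ideal norm are not changed
by composition with an isometric embedding of the target space. -/
def OpIdeal.Injective {𝕜 : Type} [RCLike 𝕜] (A : OpIdeal 𝕜) : Prop :=
  ∀ (E F G : BanachSp 𝕜) (j : F →L[𝕜] G), (∀ y : F, ‖j y‖ = ‖y‖) →
    ∀ T : E →L[𝕜] F, j.comp T ∈ A.mem E G →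
      T ∈ A.mem E F ∧ A.anorm E F T = A.anorm E G (j.comp T)

/-- A Banach operator ideal is surjective if membership and the ideal norm are not changed
by precomposition with a metric surjection (mapping open unit ball onto open unit ball). -/
def OpIdeal.Surjective {𝕜 : Type} [RCLike 𝕜] (A : OpIdeal 𝕜) : Prop :=
  ∀ (Z E F : BanachSp 𝕜) (q : Z →L[𝕜] E),
    (q '' Metric.ball (0 : Z) 1 = Metric.ball (0 : E) 1) →
    ∀ T : E →L[𝕜] F, T.comp q ∈ A.mem Z F →
      T ∈ A.mem E F ∧ A.anorm E F T = A.anorm Z F (T.comp q)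

/-- A closed operator ideal is injective if membership is not changed by composition with
an isometric embedding of the target space. -/
def ClosedOpIdeal.Injective {𝕜 : Type} [RCLike 𝕜] (A : ClosedOpIdeal 𝕜) : Prop :=
  ∀ (E F G : BanachSp 𝕜) (j : F →L[𝕜] G), (∀ y : F, ‖j y‖ = ‖y‖) →
    ∀ T : E →L[𝕜] F, j.comp T ∈ A.mem E G → T ∈ A.mem E F

/-- A compact operator: the image of the closed unit ball is relatively compact. -/
def IsCompactOp {𝕜 : Type} [RCLike 𝕜] {X Y : BanachSp 𝕜} (T : X →L[𝕜] Y) : Prop :=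
  IsCompact (closure (T '' Metric.closedBall (0 : X) 1))

/-- A weakly compact operator: the image of the closed unit ball is relatively compact in
the weak topology of the target space. -/
def IsWeaklyCompactOp {𝕜 : Type} [RCLike 𝕜] {X Y : BanachSp 𝕜} (T : X →L[𝕜] Y) : Prop :=
  IsCompact (closure ((toWeakSpace 𝕜 Y) '' (T '' Metric.closedBall (0 : X) 1)))

/-- An approximable operator: an operator-norm limit of finite-rank operators. -/
def IsApproximable {𝕜 : Type} [RCLike 𝕜] {X Y : BanachSp 𝕜} (T : X →L[𝕜] Y) : Prop :=
  T ∈ closure {S : X →L[𝕜] Y | IsFiniteRank S}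

/-- A nuclear representation of `T`: `T = Σ_n f_n ⊗ g_n` with `Σ_n ‖f_n‖ ‖g_n‖ < ∞`. -/
def NuclearRep {𝕜 : Type} [RCLike 𝕜] {X Y : BanachSp 𝕜} (T : X →L[𝕜] Y)
    (f : ℕ → StrongDual 𝕜 X) (g : ℕ → Y) : Prop :=
  Summable (fun n => ‖f n‖ * ‖g n‖) ∧ ∀ x : X, T x = ∑' n, (f n x) • g n

/-- A nuclear operator. -/
def IsNuclear {𝕜 : Type} [RCLike 𝕜] {X Y : BanachSp 𝕜} (T : X →L[𝕜] Y) : Prop :=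
  ∃ f g, NuclearRep T f g

/-- The nuclear norm: infimum of `Σ_n ‖f_n‖ ‖g_n‖` over nuclear representations. -/
def nuclearNorm {𝕜 : Type} [RCLike 𝕜] {X Y : BanachSp 𝕜} (T : X →L[𝕜] Y) : ℝ :=
  sInf {c : ℝ | ∃ f g, NuclearRep T f g ∧ c = ∑' n, ‖f n‖ * ‖g n‖}

/-- The weak `ℓ_p` norm of a finite family: `sup_{‖f‖ ≤ 1} (Σ_i |f(x_i)|^p)^{1/p}`. -/
def weakLpNorm {𝕜 : Type} [RCLike 𝕜] {X : BanachSp 𝕜} (p : ℝ) {n : ℕ} (x : Fin n → X) : ℝ :=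
  sSup {r : ℝ | ∃ f : StrongDual 𝕜 X, ‖f‖ ≤ 1 ∧ r = (∑ i, ‖f (x i)‖ ^ p) ^ (1 / p)}

/-- `C` is an absolutely `p`-summing constant for `T`. -/
def PSummingWith {𝕜 : Type} [RCLike 𝕜] {X Y : BanachSp 𝕜} (p : ℝ) (T : X →L[𝕜] Y)
    (C : ℝ) : Prop :=
  0 ≤ C ∧ ∀ (n : ℕ) (x : Fin n → X),
    (∑ i, ‖T (x i)‖ ^ p) ^ (1 / p) ≤ C * weakLpNorm p x

/-- An absolutely `p`-summing operator. -/
def IsPSumming {𝕜 : Type} [RCLike 𝕜] {X Y : BanachSp 𝕜} (p : ℝ) (T : X →L[𝕜] Y) : Prop :=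
  ∃ C, PSummingWith p T C

/-- The `p`-summing norm `π_p(T)`: the least `p`-summing constant. -/
def piNorm {𝕜 : Type} [RCLike 𝕜] {X Y : BanachSp 𝕜} (p : ℝ) (T : X →L[𝕜] Y) : ℝ :=
  sInf {C : ℝ | PSummingWith p T C}

/-- A `p`-nuclear representation of `T` (with `q` the conjugate exponent of `p`):
`T = Σ_n f_n ⊗ g_n` with `(f_n)` strongly `p`-summable and `(g_n)` weakly `q`-summable. -/
def PNuclearRep {𝕜 : Type} [RCLike 𝕜] {X Y : BanachSp 𝕜} (p q : ℝ) (T : X →L[𝕜] Y)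
    (f : ℕ → StrongDual 𝕜 X) (g : ℕ → Y) : Prop :=
  Summable (fun n => ‖f n‖ ^ p) ∧
  (∀ h : StrongDual 𝕜 Y, ‖h‖ ≤ 1 → Summable (fun n => ‖h (g n)‖ ^ q)) ∧
  BddAbove {r : ℝ | ∃ h : StrongDual 𝕜 Y, ‖h‖ ≤ 1 ∧
    r = (∑' n, ‖h (g n)‖ ^ q) ^ (1 / q)} ∧
  ∀ x : X, T x = ∑' n, (f n x) • g n

/-- A `p`-nuclear operator (with `q` the conjugate exponent of `p`). -/
def IsPNuclear {𝕜 : Type} [RCLike 𝕜] {X Y : BanachSp 𝕜} (p q : ℝ) (T : X →L[𝕜] Y) : Prop :=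
  ∃ f g, PNuclearRep p q T f g

/-- The `p`-nuclear norm `ν_p(T)`: the infimum of
`(Σ_n ‖f_n‖^p)^{1/p} * sup_{‖h‖ ≤ 1} (Σ_n |h(g_n)|^q)^{1/q}` over representations. -/
def pNuclearNorm {𝕜 : Type} [RCLike 𝕜] {X Y : BanachSp 𝕜} (p q : ℝ) (T : X →L[𝕜] Y) : ℝ :=
  sInf {c : ℝ | ∃ f g, PNuclearRep p q T f g ∧
    c = (∑' n, ‖f n‖ ^ p) ^ (1 / p) *
      sSup {r : ℝ | ∃ h : StrongDual 𝕜 Y, ‖h‖ ≤ 1 ∧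
        r = (∑' n, ‖h (g n)‖ ^ q) ^ (1 / q)}}

/-- A relatively `p`-compact subset of `E` (with `q` the conjugate exponent of `p`):
contained in the `p`-convex hull of a strongly `p`-summable sequence. -/
def RelPCompact {𝕜 : Type} [RCLike 𝕜] {E : BanachSp 𝕜} (p q : ℝ) (K : Set E) : Prop :=
  ∃ x : ℕ → E, Summable (fun n => ‖x n‖ ^ p) ∧
    K ⊆ {y : E | ∃ a : ℕ → 𝕜, Summable (fun n => ‖a n‖ ^ q) ∧
      (∑' n, ‖a n‖ ^ q) ≤ 1 ∧ y = ∑' n, a n • x n}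

/-- The `p`-approximation property: a net of finite-rank operators converging to the
identity uniformly on every relatively `p`-compact subset. -/
def HasPAP {𝕜 : Type} [RCLike 𝕜] (p q : ℝ) (E : BanachSp 𝕜) : Prop :=
  ∃ (d : DirNet) (S : d.ι → (E →L[𝕜] E)),
    (∀ α, IsFiniteRank (S α)) ∧
    ∀ K : Set E, RelPCompact p q K →
      TendstoUniformlyOn (fun α (x : E) => S α x) (fun x => x) d.filter K

/-! Flipping the arguments of the bilinear form on `X × Y` identifies `U : Y → X*` with
`Uᵗ : X → Y*`, `Uᵗ x y = U y x`; it preserves finite rank. Since `U = (Uᵗ)* ∘ J_Y` and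
`(Uᵗ)* = J_X* ∘ U**`, the ideal property gives `‖U‖_A ≤ ‖(Uᵗ)*‖_A ≤ ‖U**‖_A`, and the closed
graph theorem, applied to `U ↦ U**` on the Banach space `(A(Y;X*), ‖·‖_A)`, bounds the last
term by `C ‖U‖_A`. So the flip is an isomorphism of `A(Y;X*)` onto `A^{dual}(X;Y*)` with
equivalent norms that matches the finite-rank operators on both sides, and density transfers. -/

theorem LinearMap.continuous_of_comp_eq_comp {𝕜 E F E' F' : Type*} [NontriviallyNormedField 𝕜]
    [NormedAddCommGroup E] [NormedSpace 𝕜 E] [CompleteSpace E]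
    [NormedAddCommGroup F] [NormedSpace 𝕜 F] [CompleteSpace F]
    [TopologicalSpace E'] [TopologicalSpace F'] [T2Space F']
    (g : E →ₗ[𝕜] F) {i : E → E'} {j : F → F'} {φ : E' → F'}
    (hi : Continuous i) (hj : Continuous j) (hj_inj : Function.Injective j) (hφ : Continuous φ)
    (h : ∀ x, j (g x) = φ (i x)) : Continuous g := by
  refine g.continuous_of_isClosed_graph ?_
  have hgraph : (g.graph : Set (E × F)) = {p | j p.2 = φ (i p.1)} := by
    ext p
    rw [SetLike.mem_coe, LinearMap.mem_graph_iff, Set.mem_ofPred_eq, ← h, hj_inj.eq_iff]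
  rw [hgraph]
  exact isClosed_eq (hj.comp continuous_snd) (hφ.comp (hi.comp continuous_fst))

section
variable {𝕜 : Type} [RCLike 𝕜]

namespace IsFiniteRank

variable {E F : Type} [NormedAddCommGroup E] [NormedSpace 𝕜 E]
  [NormedAddCommGroup F] [NormedSpace 𝕜 F]

theorem of_forall_mem_span {T : E →L[𝕜] F} {s : Set F} (hs : s.Finite)
    (h : ∀ x, T x ∈ Submodule.span 𝕜 s) : IsFiniteRank T := by
  have : FiniteDimensional 𝕜 (Submodule.span 𝕜 s) := FiniteDimensional.span_of_finite 𝕜 hs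
  exact Submodule.finiteDimensional_of_le (by rintro _ ⟨x, rfl⟩; exact h x)

theorem exists_eq_sum_smulRight {T : E →L[𝕜] F} (h : IsFiniteRank T) :
    ∃ (n : ℕ) (f : Fin n → StrongDual 𝕜 E) (y : Fin n → F),
      T = ∑ i, (f i).smulRight (y i) := by
  let R := LinearMap.range (T : E →ₗ[𝕜] F)
  have : FiniteDimensional 𝕜 R := h
  let b := Module.finBasis 𝕜 R
  let T₀ : E →L[𝕜] R := T.codRestrict R fun x => LinearMap.mem_range_self _ x
  refine ⟨_, fun i => (LinearMap.toContinuousLinearMap (b.coord i)).comp T₀,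
    fun i => (b i : F), ?_⟩
  ext x
  simp only [sum_apply, ContinuousLinearMap.smulRight_apply, ContinuousLinearMap.coe_comp,
    Function.comp_apply, LinearMap.coe_toContinuousLinearMap', Module.Basis.coord_apply]
  calc T x = ((∑ i, b.repr (T₀ x) i • b i : R) : F) := by rw [b.sum_repr]; rfl
    _ = _ := by rw [Submodule.coe_sum]; rfl

theorem flip {U : E →L[𝕜] F →L[𝕜] 𝕜} (h : IsFiniteRank U) : IsFiniteRank U.flip := by
  obtain ⟨n, f, y, rfl⟩ := h.exists_eq_sum_smulRight
  refine of_forall_mem_span (Set.finite_range f) fun z => ?_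
  have : (∑ i, (f i).smulRight (y i)).flip z = ∑ i, y i z • f i := by
    ext x; simp [mul_comm]
  rw [this]
  exact Submodule.sum_mem _ fun i _ => Submodule.smul_mem _ _ (Submodule.subset_span ⟨i, rfl⟩)

end IsFiniteRank

def opAdjL (E F : BanachSp 𝕜) : (E →L[𝕜] F) →L[𝕜] F.dual →L[𝕜] E.dual :=
  (ContinuousLinearMap.compL 𝕜 E F 𝕜).flip

theorem norm_opAdj_le {E F : BanachSp 𝕜} (T : E →L[𝕜] F) : ‖opAdj T‖ ≤ ‖T‖ :=
  ContinuousLinearMap.opNorm_le_bound _ (norm_nonneg T) fun g =>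
    (g.opNorm_comp_le T).trans_eq (mul_comm _ _)

theorem norm_canJ_le (E : BanachSp 𝕜) : ‖canJ E‖ ≤ 1 :=
  NormedSpace.inclusionInDoubleDual_norm_le 𝕜 E

namespace OpIdeal

variable (A : OpIdeal 𝕜) {E F G : BanachSp 𝕜}

def submodule (E F : BanachSp 𝕜) : Submodule 𝕜 (E →L[𝕜] F) where
  carrier := A.mem E F
  add_mem' := A.add_mem E F
  zero_mem' := A.zero_mem E F
  smul_mem' := A.smul_mem E F

variable {A}

theorem sub_mem {T S : E →L[𝕜] F} (hT : T ∈ A.mem E F) (hS : S ∈ A.mem E F) :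
    T - S ∈ A.mem E F :=
  (A.submodule E F).sub_mem hT hS

theorem _root_.IsFiniteRank.mem_opIdeal {T : E →L[𝕜] F} (h : IsFiniteRank T) :
    T ∈ A.mem E F := by
  obtain ⟨n, f, y, rfl⟩ := h.exists_eq_sum_smulRight
  exact (A.submodule E F).sum_mem fun i _ => A.rankOne_mem E F (f i) (y i)

theorem anorm_nonneg {T : E →L[𝕜] F} (hT : T ∈ A.mem E F) : 0 ≤ A.anorm E F T :=
  (norm_nonneg T).trans (A.opNorm_le_anorm E F hT)

theorem anorm_zero (E F : BanachSp 𝕜) : A.anorm E F 0 = 0 := by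
  simpa using A.anorm_smul E F 0 (A.zero_mem E F)

theorem anorm_neg {T : E →L[𝕜] F} (hT : T ∈ A.mem E F) : A.anorm E F (-T) = A.anorm E F T := by
  simpa using A.anorm_smul E F (-1) hT

theorem comp_mem_left {T : E →L[𝕜] F} (R : F →L[𝕜] G) (hT : T ∈ A.mem E F) :
    R.comp T ∈ A.mem E G := by
  simpa using A.comp_mem E E F G (.id 𝕜 E) R hT

theorem comp_mem_right {T : F →L[𝕜] G} (S : E →L[𝕜] F) (hT : T ∈ A.mem F G) :
    T.comp S ∈ A.mem E G := by
  simpa using A.comp_mem E F G G S (.id 𝕜 G) hT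

theorem anorm_comp_left_le {T : E →L[𝕜] F} (R : F →L[𝕜] G) (hT : T ∈ A.mem E F) :
    A.anorm E G (R.comp T) ≤ ‖R‖ * A.anorm E F T := by
  have h := A.anorm_comp_le E E F G (.id 𝕜 E) R hT
  rw [ContinuousLinearMap.comp_id] at h
  exact h.trans (mul_le_of_le_one_right (mul_nonneg (norm_nonneg R) (anorm_nonneg hT))
    ContinuousLinearMap.norm_id_le)

theorem anorm_comp_right_le {T : F →L[𝕜] G} (S : E →L[𝕜] F) (hT : T ∈ A.mem F G) :
    A.anorm E G (T.comp S) ≤ A.anorm F G T * ‖S‖ := by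
  have h := A.anorm_comp_le E F G G S (.id 𝕜 G) hT
  rw [ContinuousLinearMap.id_comp] at h
  exact h.trans (mul_le_mul_of_nonneg_right
    (mul_le_of_le_one_left (anorm_nonneg hT) ContinuousLinearMap.norm_id_le) (norm_nonneg S))

variable (A E F)

/-- A type synonym for `A(E;F)`, so that it can carry the ideal norm rather than the operator
norm of the subtype. -/
def Component : Type := A.submodule E F

instance : AddCommGroup (A.Component E F) := inferInstanceAs (AddCommGroup (A.submodule E F))

instance : Module 𝕜 (A.Component E F) := inferInstanceAs (Module 𝕜 (A.submodule E F))

variable {A E F}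

namespace Component

def mk (T : E →L[𝕜] F) (hT : T ∈ A.mem E F) : A.Component E F := (⟨T, hT⟩ : A.submodule E F)

def val (a : A.Component E F) : E →L[𝕜] F := Subtype.val (p := (· ∈ A.submodule E F)) a

theorem val_mem (a : A.Component E F) : a.val ∈ A.mem E F :=
  Subtype.prop (p := (· ∈ A.submodule E F)) a

theorem val_injective : Function.Injective (val : A.Component E F → E →L[𝕜] F) :=
  Subtype.val_injective

def valₗ : A.Component E F →ₗ[𝕜] E →L[𝕜] F := (A.submodule E F).subtype

instance : NormedAddCommGroup (A.Component E F) :=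
  AddGroupNorm.toNormedAddCommGroup
    { toFun := fun a => A.anorm E F a.val
      map_zero' := A.anorm_zero E F
      add_le' := fun a b => A.anorm_add_le E F a.val_mem b.val_mem
      neg' := fun a => anorm_neg a.val_mem
      eq_zero_of_map_eq_zero' := fun a h => val_injective <|
        norm_le_zero_iff.1 (h ▸ A.opNorm_le_anorm E F a.val_mem) }

theorem norm_def (a : A.Component E F) : ‖a‖ = A.anorm E F a.val := rfl

theorem val_sub (a b : A.Component E F) : (a - b).val = a.val - b.val := rfl

theorem val_mk (T : E →L[𝕜] F) (hT : T ∈ A.mem E F) : (mk T hT).val = T := rfl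

instance : NormedSpace 𝕜 (A.Component E F) :=
  ⟨fun c a => (A.anorm_smul E F c a.val_mem).le⟩

instance : CompleteSpace (A.Component E F) := by
  refine Metric.complete_of_cauchySeq_tendsto fun u hu => ?_
  obtain ⟨T, hT, hlim⟩ := A.complete E F (fun n => (u n).val) (fun n => (u n).val_mem)
    fun ε hε => by simpa [dist_eq_norm, norm_def, val_sub] using Metric.cauchySeq_iff.1 hu ε hε
  refine ⟨mk T hT, Metric.tendsto_atTop.2 fun ε hε => ?_⟩
  simpa [dist_eq_norm, norm_def, val_sub, val_mk] using hlim ε hε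

theorem continuous_val : Continuous (val : A.Component E F → E →L[𝕜] F) :=
  AddMonoidHomClass.continuous_of_bound (valₗ (A := A) (E := E) (F := F)) 1 fun a => by
    change ‖a.val‖ ≤ 1 * ‖a‖
    simpa [norm_def] using A.opNorm_le_anorm E F a.val_mem

end Component

def biadjointₗ (hbidual : ∀ T ∈ A.mem E F, opAdj (opAdj T) ∈ A.mem E.dual.dual F.dual.dual) :
    A.Component E F →ₗ[𝕜] A.Component E.dual.dual F.dual.dual :=
  (((opAdjL F.dual E.dual).comp (opAdjL E F)).toLinearMap ∘ₗ Component.valₗ).codRestrict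
    (A.submodule E.dual.dual F.dual.dual) fun a => hbidual _ a.val_mem

theorem exists_anorm_biadjoint_le
    (hbidual : ∀ T ∈ A.mem E F, opAdj (opAdj T) ∈ A.mem E.dual.dual F.dual.dual) :
    ∃ C, 0 < C ∧ ∀ T ∈ A.mem E F,
      A.anorm E.dual.dual F.dual.dual (opAdj (opAdj T)) ≤ C * A.anorm E F T := by
  have hcont : Continuous (biadjointₗ hbidual) :=
    (biadjointₗ hbidual).continuous_of_comp_eq_comp Component.continuous_val
      Component.continuous_val Component.val_injective
      ((opAdjL F.dual E.dual).comp (opAdjL E F)).continuous fun _ => rfl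
  obtain ⟨C, hC, hbound⟩ := (⟨biadjointₗ hbidual, hcont⟩ :
    A.Component E F →L[𝕜] A.Component E.dual.dual F.dual.dual).bound
  exact ⟨C, hC, fun T hT => hbound (Component.mk T hT)⟩

end OpIdeal

def dualFlip (X Y : BanachSp 𝕜) : (Y →L[𝕜] X.dual) ≃ₗᵢ[𝕜] (X →L[𝕜] Y.dual) :=
  ContinuousLinearMap.flipₗᵢ 𝕜 Y X 𝕜

variable {X Y : BanachSp 𝕜}

theorem opAdj_dualFlip_comp_canJ (U : Y →L[𝕜] X.dual) :
    (opAdj (dualFlip X Y U)).comp (canJ Y) = U := rfl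

theorem opAdj_dualFlip (U : Y →L[𝕜] X.dual) :
    opAdj (dualFlip X Y U) = (opAdj (canJ X)).comp (opAdj (opAdj U)) := rfl

theorem IsFiniteRank.dualFlip {U : Y →L[𝕜] X.dual} (h : IsFiniteRank U) :
    IsFiniteRank (_root_.dualFlip X Y U) :=
  IsFiniteRank.flip h

theorem IsFiniteRank.of_dualFlip {U : Y →L[𝕜] X.dual}
    (h : IsFiniteRank (_root_.dualFlip X Y U)) : IsFiniteRank U :=
  (_root_.dualFlip X Y).symm_apply_apply U ▸ IsFiniteRank.flip h

namespace OpIdeal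

variable {A : OpIdeal 𝕜} {U : Y →L[𝕜] X.dual}

theorem mem_of_opAdj_dualFlip_mem (h : opAdj (dualFlip X Y U) ∈ A.mem Y.dual.dual X.dual) :
    U ∈ A.mem Y X.dual :=
  opAdj_dualFlip_comp_canJ U ▸ comp_mem_right (canJ Y) h

theorem anorm_le_anorm_opAdj_dualFlip (h : opAdj (dualFlip X Y U) ∈ A.mem Y.dual.dual X.dual) :
    A.anorm Y X.dual U ≤ A.anorm Y.dual.dual X.dual (opAdj (dualFlip X Y U)) := by
  conv_lhs => rw [← opAdj_dualFlip_comp_canJ U]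
  exact (anorm_comp_right_le (canJ Y) h).trans
    (mul_le_of_le_one_right (anorm_nonneg h) (norm_canJ_le Y))

theorem opAdj_dualFlip_mem (h : opAdj (opAdj U) ∈ A.mem Y.dual.dual X.dual.dual.dual) :
    opAdj (dualFlip X Y U) ∈ A.mem Y.dual.dual X.dual :=
  opAdj_dualFlip U ▸ comp_mem_left (opAdj (canJ X)) h

theorem anorm_opAdj_dualFlip_le (h : opAdj (opAdj U) ∈ A.mem Y.dual.dual X.dual.dual.dual) :
    A.anorm Y.dual.dual X.dual (opAdj (dualFlip X Y U)) ≤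
      A.anorm Y.dual.dual X.dual.dual.dual (opAdj (opAdj U)) := by
  rw [opAdj_dualFlip]
  exact (anorm_comp_left_le _ h).trans (mul_le_of_le_one_left (anorm_nonneg h)
    ((norm_opAdj_le (canJ X)).trans (norm_canJ_le X)))

end OpIdeal
end

theorem stmt15 {𝕜 : Type} [RCLike 𝕜] (A : OpIdeal 𝕜)
    (hbidual : ∀ (E F : BanachSp 𝕜) (T : E →L[𝕜] F), T ∈ A.mem E F →
      opAdj (opAdj T) ∈ A.mem E.dual.dual F.dual.dual)
    (X Y : BanachSp 𝕜) :
    (∀ T : Y →L[𝕜] X.dual, T ∈ A.mem Y X.dual →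
        ∀ ε : ℝ, 0 < ε → ∃ S : Y →L[𝕜] X.dual, IsFiniteRank S ∧
          A.anorm Y X.dual (T - S) < ε) ↔
    (∀ T : X →L[𝕜] Y.dual, opAdj T ∈ A.mem Y.dual.dual X.dual →
        ∀ ε : ℝ, 0 < ε → ∃ S : X →L[𝕜] Y.dual, IsFiniteRank S ∧
          A.anorm Y.dual.dual X.dual (opAdj (T - S)) < ε) := by
  obtain ⟨C, hC, hbiadj⟩ := A.exists_anorm_biadjoint_le (hbidual Y X.dual)
  constructor
  · intro happrox T hT ε hε
    obtain ⟨U, rfl⟩ := (dualFlip X Y).surjective T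
    have hU := OpIdeal.mem_of_opAdj_dualFlip_mem hT
    obtain ⟨G, hG, hUG⟩ := happrox U hU (ε / C) (div_pos hε hC)
    have hUG_mem := A.sub_mem hU hG.mem_opIdeal
    refine ⟨dualFlip X Y G, hG.dualFlip, ?_⟩
    calc A.anorm _ _ (opAdj (dualFlip X Y U - dualFlip X Y G))
        = A.anorm _ _ (opAdj (dualFlip X Y (U - G))) := by rw [map_sub]
      _ ≤ A.anorm _ _ (opAdj (opAdj (U - G))) :=
          OpIdeal.anorm_opAdj_dualFlip_le (hbidual _ _ _ hUG_mem)
      _ ≤ C * A.anorm Y X.dual (U - G) := hbiadj _ hUG_mem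
      _ < ε := (lt_div_iff₀' hC).1 hUG
  · intro happrox U hU ε hε
    obtain ⟨S, hS, hTS⟩ :=
      happrox (dualFlip X Y U) (OpIdeal.opAdj_dualFlip_mem (hbidual _ _ _ hU)) ε hε
    obtain ⟨G, rfl⟩ := (dualFlip X Y).surjective S
    have hG := IsFiniteRank.of_dualFlip hS
    have hUG_mem := A.sub_mem hU hG.mem_opIdeal
    refine ⟨G, hG, ?_⟩
    calc A.anorm Y X.dual (U - G)
        ≤ A.anorm _ _ (opAdj (dualFlip X Y (U - G))) :=
          OpIdeal.anorm_le_anorm_opAdj_dualFlip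
            (OpIdeal.opAdj_dualFlip_mem (hbidual _ _ _ hUG_mem))
      _ < ε := by rwa [map_sub]
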